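/- Let $f_i : \mathbb{R} \to \mathbb{R} \cup \{+\infty\}$, $i = 1, \dots, N$, be proper closed strictly convex functions with $\mathrm{dom}\, f_i \subset [0,1]$, and let $F(w) = \sum_{i=1}^N f_i(w^i) + \delta_\Delta(w)$. Fix $\psi_1 \in \mathbb{R}^N$, $\gamma \geq 0$, an index $k$, and set $\psi_2 = \psi_1 - \gamma e_k$. Then $\frac{\partial F^*}{\partial \psi^k}(\psi_1) - \frac{\partial F^*}{\partial \psi^k}(\psi_2) = \sum_{j \neq k} \left| \frac{\partial F^*}{\partial \psi^j}(\psi_1) - \frac{\partial F^*}{\partial \psi^j}(\psi_2) \right|$. -/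

import Mathlib

noncomputable section
open scoped BigOperators Classical

abbrev E (N : ℕ) := EuclideanSpace ℝ (Fin N)

def simplex (N : ℕ) : Set (E N) := {w | (∑ i, w i) = 1 ∧ ∀ i, 0 ≤ w i}

/-- Strict convexity (on the effective domain) for extended-real-valued functions on ℝ. -/
def StrictConvex1 (f : ℝ → EReal) : Prop :=
  ∀ x y : ℝ, f x ≠ ⊤ → f y ≠ ⊤ → x ≠ y → ∀ t : ℝ, 0 < t → t < 1 →
    f (t * x + (1 - t) * y) < (t : EReal) * f x + ((1 - t : ℝ) : EReal) * f y

/-- One-dimensional subdifferential of an extended-real-valued function. -/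
def subdiff1 (f : ℝ → EReal) (x : ℝ) : Set ℝ :=
  {p | ∀ y : ℝ, f x + ((p * (y - x) : ℝ) : EReal) ≤ f y}

/-- The convex (Legendre–Fenchel) conjugate. -/
def conj {N : ℕ} (F : E N → EReal) (ψ : E N) : EReal :=
  ⨆ w : E N, ((inner ℝ ψ w : ℝ) : EReal) - F w

/-!
The gradient of `F*` at `ψ` is the maximiser of `⟪ψ, w⟫ - F w`: a maximiser exists because `F` is
closed and finite only on the compact simplex, it is a subgradient of `F*`, and a subgradient of a
differentiable function is its gradient. (If `F ≡ ⊤`, then `F* ≡ ⊥`, whose `toReal` is `0`, so both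
gradients vanish.)

Passing from `ψ₁` to `ψ₂` lowers only the price of `k`. If the maximiser `w₁` at `ψ₁` had
`w₂ j < w₁ j` for some `j ≠ k`, there would be an `l` with `w₁ l < w₂ l`, and shifting a small mass
`ε` from `j` to `l` in `w₁` and from `l` to `j` in `w₂` would, by strict convexity of `f j` and
`f l`, strictly increase the sum of the two objectives. Hence `w₁ j ≤ w₂ j` for all `j ≠ k`, and as
both weight vectors sum to `1`, the drop at `k` is the total increase elsewhere.
-/

theorem EReal.coe_finset_sum {ι : Type*} (s : Finset ι) (a : ι → ℝ) :
    ((∑ i ∈ s, a i : ℝ) : EReal) = ∑ i ∈ s, (a i : EReal) :=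
  map_sum (⟨⟨Real.toEReal, EReal.coe_zero⟩, EReal.coe_add⟩ : ℝ →+ EReal) a s

theorem EReal.sum_ne_bot {ι : Type*} {s : Finset ι} {a : ι → EReal} (h : ∀ i ∈ s, a i ≠ ⊥) :
    ∑ i ∈ s, a i ≠ ⊥ := by
  induction s using Finset.cons_induction with
  | empty => simp
  | cons i s hi ih =>
    rw [Finset.sum_cons, ne_eq, EReal.add_eq_bot_iff, not_or]
    exact ⟨h i (s.mem_cons_self i), ih fun j hj => h j (Finset.mem_cons_of_mem hj)⟩

theorem EReal.lowerSemicontinuous_sum {X ι : Type*} [TopologicalSpace X] {s : Finset ι}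
    {a : ι → X → EReal} (h : ∀ i ∈ s, LowerSemicontinuous (a i))
    (hbot : ∀ i ∈ s, ∀ x, a i x ≠ ⊥) :
    LowerSemicontinuous fun x => ∑ i ∈ s, a i x := by
  induction s using Finset.cons_induction with
  | empty => simpa using lowerSemicontinuous_const
  | cons i s hi ih =>
    simp only [Finset.sum_cons]
    refine (h i (s.mem_cons_self i)).add' (ih (fun j hj => h j (Finset.mem_cons_of_mem hj))
      fun j hj => hbot j (Finset.mem_cons_of_mem hj)) fun x => EReal.continuousAt_add
        (Or.inr (EReal.sum_ne_bot fun j hj => hbot j (Finset.mem_cons_of_mem hj) x))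
        (Or.inl (hbot i (s.mem_cons_self i) x))

section StrictConvex1

variable {f : ℝ → EReal}

theorem StrictConvex1.lt_coe (hf : StrictConvex1 f) (hbot : ∀ x, f x ≠ ⊥) {x y : ℝ}
    (hx : f x ≠ ⊤) (hy : f y ≠ ⊤) (hxy : x ≠ y) {a b : ℝ} (ha : 0 < a) (hb : 0 < b)
    (hab : a + b = 1) :
    f (a * x + b * y) < ((a * (f x).toReal + b * (f y).toReal : ℝ) : EReal) := by
  obtain rfl : b = 1 - a := by linarith
  have h := hf x y hx hy hxy a ha (by linarith)
  rwa [← EReal.coe_toReal hx (hbot x), ← EReal.coe_toReal hy (hbot y), ← EReal.coe_mul,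
    ← EReal.coe_mul, ← EReal.coe_add] at h

theorem StrictConvex1.convex_setOf_ne_top (hf : StrictConvex1 f) (hbot : ∀ x, f x ≠ ⊥) :
    Convex ℝ {x | f x ≠ ⊤} :=
  convex_iff_pairwise_pos.2 fun _ hx _ hy hxy _ _ ha hb hab =>
    ne_top_of_lt (hf.lt_coe hbot hx hy hxy ha hb hab)

theorem StrictConvex1.strictConvexOn_toReal (hf : StrictConvex1 f) (hbot : ∀ x, f x ≠ ⊥) :
    StrictConvexOn ℝ {x | f x ≠ ⊤} fun x => (f x).toReal := by
  refine ⟨hf.convex_setOf_ne_top hbot, fun x hx y hy hxy a b ha hb hab => ?_⟩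
  have h := hf.lt_coe hbot hx hy hxy ha hb hab
  rw [← EReal.coe_toReal (ne_top_of_lt h) (hbot _), EReal.coe_lt_coe_iff] at h
  simpa only [smul_eq_mul] using h

end StrictConvex1

theorem StrictConvexOn.map_add_add_map_sub_lt {s : Set ℝ} {φ : ℝ → ℝ}
    (hφ : StrictConvexOn ℝ s φ) {a b ε : ℝ} (ha : a ∈ s) (hb : b ∈ s) (hε : 0 < ε)
    (hεab : ε < b - a) : φ (a + ε) + φ (b - ε) < φ a + φ b := by
  have hab : 0 < b - a := hε.trans hεab
  set t := ε / (b - a) with ht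
  have ht0 : 0 < t := div_pos hε hab
  have ht1 : t < 1 := (div_lt_one hab).2 hεab
  have hεt : ε = t * (b - a) := by rw [ht, div_mul_cancel₀ _ hab.ne']
  have h₁ := hφ.2 ha hb (by linarith) (sub_pos.2 ht1) ht0 (sub_add_cancel 1 t)
  have h₂ := hφ.2 ha hb (by linarith) ht0 (sub_pos.2 ht1) (add_sub_cancel t 1)
  rw [smul_eq_mul, smul_eq_mul, show (1 - t) * a + t * b = a + ε by rw [hεt]; ring] at h₁
  rw [smul_eq_mul, smul_eq_mul, show t * a + (1 - t) * b = b - ε by rw [hεt]; ring] at h₂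
  simp only [smul_eq_mul] at h₁ h₂
  linarith

section Transfer

variable {ι : Type*} [DecidableEq ι]

def transfer (w : ι → ℝ) (j l : ι) (ε : ℝ) : ι → ℝ :=
  Function.update (Function.update w j (w j - ε)) l (w l + ε)

variable {w : ι → ℝ} {j l : ι} {ε : ℝ}

theorem transfer_apply_left (hjl : j ≠ l) : transfer w j l ε j = w j - ε := by
  simp [transfer, hjl]

theorem transfer_apply_right : transfer w j l ε l = w l + ε := by
  simp [transfer]

theorem transfer_apply_of_ne {i : ι} (hij : i ≠ j) (hil : i ≠ l) : transfer w j l ε i = w i := by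
  simp [transfer, hij, hil]

variable [Fintype ι]

def budgetSet (s : ι → Set ℝ) (c : ℝ) : Set (ι → ℝ) := {w | ∑ i, w i = c ∧ ∀ i, w i ∈ s i}

theorem sum_transfer_sub_sum (h : ι → ℝ → ℝ) (hjl : j ≠ l) :
    ∑ i, h i (transfer w j l ε i) - ∑ i, h i (w i) =
      (h j (w j - ε) - h j (w j)) + (h l (w l + ε) - h l (w l)) := by
  rw [← Finset.sum_sub_distrib, Fintype.sum_eq_add j l hjl, transfer_apply_left hjl,
    transfer_apply_right]
  rintro i ⟨hij, hil⟩
  rw [transfer_apply_of_ne hij hil, sub_self]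

theorem transfer_mem_budgetSet {s : ι → Set ℝ} {c : ℝ} (hw : w ∈ budgetSet s c) (hjl : j ≠ l)
    (hj : w j - ε ∈ s j) (hl : w l + ε ∈ s l) : transfer w j l ε ∈ budgetSet s c := by
  refine ⟨?_, fun i => ?_⟩
  · linarith [hw.1, sum_transfer_sub_sum (w := w) (ε := ε) (fun _ x => x) hjl]
  rcases eq_or_ne i j with rfl | hij
  · rwa [transfer_apply_left hjl]
  rcases eq_or_ne i l with rfl | hil
  · rwa [transfer_apply_right]
  · rw [transfer_apply_of_ne hij hil]; exact hw.2 i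

theorem le_of_isMaxOn_budgetSet {s : ι → Set ℝ} {φ : ι → ℝ → ℝ}
    (hφ : ∀ i, StrictConvexOn ℝ (s i) (φ i)) {c : ℝ} {ψ₁ ψ₂ w₁ w₂ : ι → ℝ}
    (hw₁ : w₁ ∈ budgetSet s c)
    (h₁ : IsMaxOn (fun w => ∑ i, (ψ₁ i * w i - φ i (w i))) (budgetSet s c) w₁)
    (hw₂ : w₂ ∈ budgetSet s c)
    (h₂ : IsMaxOn (fun w => ∑ i, (ψ₂ i * w i - φ i (w i))) (budgetSet s c) w₂)
    (hj : ∀ l, ψ₁ j - ψ₂ j ≤ ψ₁ l - ψ₂ l) : w₁ j ≤ w₂ j := by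
  by_contra! hlt
  obtain ⟨l, hl⟩ : ∃ l, w₁ l < w₂ l := by
    by_contra! h
    linarith [hw₁.1, hw₂.1, Finset.sum_lt_sum (fun i _ => h i) ⟨j, Finset.mem_univ j, hlt⟩]
  have hjl : j ≠ l := by rintro rfl; linarith
  obtain ⟨ε, hε, hεj, hεl⟩ : ∃ ε, 0 < ε ∧ ε < w₁ j - w₂ j ∧ ε < w₂ l - w₁ l :=
    exists_between (lt_min (sub_pos.2 hlt) (sub_pos.2 hl)) |>.imp fun _ h =>
      ⟨h.1, h.2.trans_le (min_le_left _ _), h.2.trans_le (min_le_right _ _)⟩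
  have hmem : ∀ {i x}, x ∈ Set.uIcc (w₁ i) (w₂ i) → x ∈ s i := fun hx =>
    (hφ _).1.ordConnected.uIcc_subset (hw₁.2 _) (hw₂.2 _) hx
  have hA := h₁ (transfer_mem_budgetSet hw₁ hjl
    (hmem (Set.mem_uIcc.2 (Or.inr ⟨by linarith, by linarith⟩)))
    (hmem (Set.mem_uIcc.2 (Or.inl ⟨by linarith, by linarith⟩))))
  have hB := h₂ (transfer_mem_budgetSet hw₂ hjl.symm
    (hmem (Set.mem_uIcc.2 (Or.inl ⟨by linarith, by linarith⟩)))
    (hmem (Set.mem_uIcc.2 (Or.inr ⟨by linarith, by linarith⟩))))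
  simp only [Set.mem_ofPred_eq] at hA hB
  have hchange₁ := sum_transfer_sub_sum (w := w₁) (ε := ε) (fun i x => ψ₁ i * x - φ i x) hjl
  have hchange₂ := sum_transfer_sub_sum (w := w₂) (ε := ε) (fun i x => ψ₂ i * x - φ i x) hjl.symm
  have hgain_j := (hφ j).map_add_add_map_sub_lt (hw₂.2 j) (hw₁.2 j) hε hεj
  have hgain_l := (hφ l).map_add_add_map_sub_lt (hw₁.2 l) (hw₂.2 l) hε hεl
  have hψ := mul_le_mul_of_nonneg_right (hj l) hε.le
  linarith

theorem sub_eq_sum_erase_abs_sub {a b : ι → ℝ} {k : ι} (hsum : ∑ i, a i = ∑ i, b i)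
    (hle : ∀ j ≠ k, a j ≤ b j) : a k - b k = ∑ j ∈ Finset.univ.erase k, |a j - b j| := by
  rw [← Finset.add_sum_erase _ a (Finset.mem_univ k),
    ← Finset.add_sum_erase _ b (Finset.mem_univ k)] at hsum
  rw [Finset.sum_congr rfl fun j hj => by
    rw [abs_sub_comm, abs_of_nonneg (sub_nonneg.2 (hle j (Finset.ne_of_mem_erase hj)))],
    Finset.sum_sub_distrib]
  linarith

end Transfer

theorem HasGradientAt.eq_of_forall_add_inner_le {H : Type*} [NormedAddCommGroup H]
    [InnerProductSpace ℝ H] [CompleteSpace H] {u : H → ℝ} {g x w : H}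
    (hg : HasGradientAt u g x) (hw : ∀ y, u x + inner ℝ w (y - x) ≤ u y) : g = w := by
  have hmin : IsLocalMin (fun y => u y - inner ℝ w y) x := Filter.Eventually.of_forall fun y => by
    have := hw y
    rw [inner_sub_right] at this
    linarith
  have hderiv := hg.hasFDerivAt.sub (InnerProductSpace.toDual ℝ H w).hasFDerivAt
  have := hmin.hasFDerivAt_eq_zero hderiv
  rw [sub_eq_zero] at this
  exact (InnerProductSpace.toDual ℝ H).injective (by exact_mod_cast this)

section Conjugate

variable {N : ℕ} {F : E N → EReal} {ψ w : E N}

theorem conj_eq_of_forall_le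
    (h : ∀ v, ((inner ℝ ψ v : ℝ) : EReal) - F v ≤ ((inner ℝ ψ w : ℝ) : EReal) - F w) :
    conj F ψ = ((inner ℝ ψ w : ℝ) : EReal) - F w :=
  le_antisymm (iSup_le h) (le_iSup (fun v => ((inner ℝ ψ v : ℝ) : EReal) - F v) w)

theorem conj_eq_bot_of_forall_eq_top (h : ∀ w, F w = ⊤) (ψ : E N) : conj F ψ = ⊥ := by
  simp [conj, h, EReal.sub_top]

theorem conj_toReal_add_inner_le
    (hmax : ∀ v, ((inner ℝ ψ v : ℝ) : EReal) - F v ≤ ((inner ℝ ψ w : ℝ) : EReal) - F w)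
    (htop : F w ≠ ⊤) (hbot : F w ≠ ⊥) {φ : E N} (hφ : conj F φ ≠ ⊤) :
    (conj F ψ).toReal + inner ℝ w (φ - ψ) ≤ (conj F φ).toReal := by
  obtain ⟨r, hr⟩ : ∃ r : ℝ, F w = r := ⟨_, (EReal.coe_toReal htop hbot).symm⟩
  have hle : ((inner ℝ φ w - r : ℝ) : EReal) ≤ conj F φ := by
    rw [EReal.coe_sub, ← hr]
    exact le_iSup (fun v => ((inner ℝ φ v : ℝ) : EReal) - F v) w
  have := EReal.toReal_le_toReal hle (EReal.coe_ne_bot _) hφ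
  rw [conj_eq_of_forall_le hmax, hr, ← EReal.coe_sub, EReal.toReal_coe, inner_sub_right,
    real_inner_comm φ w, real_inner_comm ψ w]
  rw [EReal.toReal_coe] at this
  linarith

theorem exists_forall_inner_sub_le (hF : LowerSemicontinuous F) {s : Set (E N)}
    (hs : IsCompact s) (htop : ∀ w ∉ s, F w = ⊤) {w₀ : E N} (hw₀ : F w₀ ≠ ⊤) (ψ : E N) :
    ∃ w, F w ≠ ⊤ ∧
      ∀ v, ((inner ℝ ψ v : ℝ) : EReal) - F v ≤ ((inner ℝ ψ w : ℝ) : EReal) - F w := by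
  have husc : UpperSemicontinuous fun v => ((inner ℝ ψ v : ℝ) : EReal) - F v := by
    simp_rw [sub_eq_add_neg]
    refine (continuous_coe_real_ereal.comp (continuous_const.inner continuous_id))
      |>.upperSemicontinuous.add' ?_ fun v =>
        EReal.continuousAt_add (Or.inl (EReal.coe_ne_top _)) (Or.inl (EReal.coe_ne_bot _))
    exact continuous_neg.comp_lowerSemicontinuous_antitone hF fun _ _ => EReal.neg_le_neg_iff.2
  have hw₀s : w₀ ∈ s := by_contra fun h => hw₀ (htop _ h)
  obtain ⟨w, -, hw⟩ :=
    UpperSemicontinuousOn.exists_isMaxOn ⟨w₀, hw₀s⟩ hs (husc.upperSemicontinuousOn s)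
  have hmax : ∀ v, ((inner ℝ ψ v : ℝ) : EReal) - F v ≤ ((inner ℝ ψ w : ℝ) : EReal) - F w := by
    intro v
    by_cases hv : v ∈ s
    · exact hw hv
    · rw [htop v hv, EReal.sub_top]; exact bot_le
  refine ⟨w, fun hwt => ?_, hmax⟩
  have h₀ := hmax w₀
  rw [hwt, EReal.sub_top, le_bot_iff, ← EReal.coe_toReal hw₀ ?_, ← EReal.coe_sub] at h₀
  · exact EReal.coe_ne_bot _ h₀
  · intro hbot
    rw [hbot, EReal.coe_sub_bot] at h₀
    exact top_ne_bot h₀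

theorem forall_le_of_hasGradientAt_conj (hbot : ∀ w, F w ≠ ⊥)
    (hmax : ∀ ψ, ∃ w, F w ≠ ⊤ ∧
      ∀ v, ((inner ℝ ψ v : ℝ) : EReal) - F v ≤ ((inner ℝ ψ w : ℝ) : EReal) - F w)
    {g : E N} (hg : HasGradientAt (fun φ => (conj F φ).toReal) g ψ) :
    F g ≠ ⊤ ∧ ∀ v, ((inner ℝ ψ v : ℝ) : EReal) - F v ≤ ((inner ℝ ψ g : ℝ) : EReal) - F g := by
  have hfin : ∀ φ, conj F φ ≠ ⊤ := fun φ => by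
    obtain ⟨w, hwt, hw⟩ := hmax φ
    rw [conj_eq_of_forall_le hw, ← EReal.coe_toReal hwt (hbot w), ← EReal.coe_sub]
    exact EReal.coe_ne_top _
  obtain ⟨w, hwt, hw⟩ := hmax ψ
  obtain rfl := hg.eq_of_forall_add_inner_le fun φ =>
    conj_toReal_add_inner_le hw hwt (hbot w) (hfin φ)
  exact ⟨hwt, hw⟩

end Conjugate

section SumOnSimplex

variable {N : ℕ} {f : Fin N → ℝ → EReal}

def sumOnSimplex (f : Fin N → ℝ → EReal) (w : E N) : EReal :=
  (∑ i, f i (w i)) + (if w ∈ simplex N then (0 : EReal) else ⊤)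

def effectiveDomain (f : Fin N → ℝ → EReal) : Set (Fin N → ℝ) :=
  budgetSet (fun i => Set.Ici 0 ∩ {x | f i x ≠ ⊤}) 1

theorem isCompact_simplex : IsCompact (simplex N) := by
  have : simplex N = PiLp.homeomorph 2 (fun _ : Fin N => ℝ) ⁻¹' stdSimplex ℝ (Fin N) := by
    ext w
    exact and_comm
  rw [this, Homeomorph.isCompact_preimage]
  exact isCompact_stdSimplex ℝ (Fin N)

theorem sumOnSimplex_eq (hbot : ∀ i x, f i x ≠ ⊥) (w : E N) :
    sumOnSimplex f w =
      if ⇑w ∈ effectiveDomain f then ((∑ i, (f i (w i)).toReal : ℝ) : EReal) else ⊤ := by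
  have hsum : ∀ s : Finset (Fin N), ∑ i ∈ s, f i (w i) ≠ ⊥ := fun s =>
    EReal.sum_ne_bot fun i _ => hbot i _
  unfold sumOnSimplex
  by_cases hΔ : w ∈ simplex N
  · by_cases hdom : ∀ i, f i (w i) ≠ ⊤
    · rw [if_pos hΔ, if_pos ⟨hΔ.1, fun i => ⟨hΔ.2 i, hdom i⟩⟩, add_zero, EReal.coe_finset_sum]
      exact Finset.sum_congr rfl fun i _ => (EReal.coe_toReal (hdom i) (hbot i _)).symm
    · push Not at hdom
      obtain ⟨i, hi⟩ := hdom
      rw [if_pos hΔ, if_neg fun h => (h.2 i).2 hi, add_zero,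
        ← Finset.add_sum_erase _ _ (Finset.mem_univ i), hi, EReal.top_add_of_ne_bot (hsum _)]
  · rw [if_neg hΔ, if_neg fun h => hΔ ⟨h.1, fun i => (h.2 i).1⟩,
      EReal.add_top_of_ne_bot (hsum _)]

theorem lowerSemicontinuous_sumOnSimplex (hbot : ∀ i x, f i x ≠ ⊥)
    (hclosed : ∀ i, LowerSemicontinuous (f i)) : LowerSemicontinuous (sumOnSimplex f) := by
  have hsum : LowerSemicontinuous fun w : E N => ∑ i, f i (w i) :=
    EReal.lowerSemicontinuous_sum (fun i _ => (hclosed i).comp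
      ((continuous_apply i).comp (PiLp.continuous_ofLp 2 _))) fun i _ w => hbot i _
  have hind : LowerSemicontinuous fun w : E N => if w ∈ simplex N then (0 : EReal) else ⊤ := by
    have h := (isCompact_simplex (N := N)).isClosed.isOpen_compl.lowerSemicontinuous_indicator
      (le_top : (0 : EReal) ≤ ⊤)
    convert h using 1
    ext w
    by_cases hw : w ∈ simplex N <;> simp [hw]
  exact hsum.add' hind fun w => EReal.continuousAt_add (Or.inr (by split_ifs <;> simp))
    (Or.inl (EReal.sum_ne_bot (s := Finset.univ) fun i _ => hbot i (w i)))

theorem isMaxOn_effectiveDomain (hbot : ∀ i x, f i x ≠ ⊥) {ψ w : E N}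
    (hwt : sumOnSimplex f w ≠ ⊤)
    (hw : ∀ v, ((inner ℝ ψ v : ℝ) : EReal) - sumOnSimplex f v ≤
      ((inner ℝ ψ w : ℝ) : EReal) - sumOnSimplex f w) :
    ⇑w ∈ effectiveDomain f ∧
      IsMaxOn (fun v => ∑ i, (ψ i * v i - (f i (v i)).toReal)) (effectiveDomain f) ⇑w := by
  have hobj : ∀ v : E N, ⇑v ∈ effectiveDomain f → ((inner ℝ ψ v : ℝ) : EReal) - sumOnSimplex f v
      = ((∑ i, (ψ i * v i - (f i (v i)).toReal) : ℝ) : EReal) := fun v hv => by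
    rw [sumOnSimplex_eq hbot, if_pos hv, ← EReal.coe_sub, Finset.sum_sub_distrib]
    simp [PiLp.inner_apply, mul_comm]
  have hwK : ⇑w ∈ effectiveDomain f :=
    by_contra fun h => hwt (by rw [sumOnSimplex_eq hbot, if_neg h])
  refine ⟨hwK, fun v hv => ?_⟩
  have := hw (WithLp.toLp 2 v)
  rwa [hobj _ hv, hobj w hwK, EReal.coe_le_coe_iff] at this

theorem eq_zero_of_hasGradientAt_conj_sumOnSimplex (hbot : ∀ i x, f i x ≠ ⊥)
    (hK : effectiveDomain f = ∅) {ψ g : E N}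
    (hg : HasGradientAt (fun φ => (conj (sumOnSimplex f) φ).toReal) g ψ) : g = 0 := by
  have htop : ∀ w, sumOnSimplex f w = ⊤ := fun w => by
    rw [sumOnSimplex_eq hbot, hK, if_neg (Set.notMem_empty _)]
  exact hg.eq_of_forall_add_inner_le fun φ => by simp [conj_eq_bot_of_forall_eq_top htop]

theorem isMaxOn_effectiveDomain_of_hasGradientAt_conj (hbot : ∀ i x, f i x ≠ ⊥)
    (hclosed : ∀ i, LowerSemicontinuous (f i)) (hK : (effectiveDomain f).Nonempty) {ψ g : E N}
    (hg : HasGradientAt (fun φ => (conj (sumOnSimplex f) φ).toReal) g ψ) :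
    ⇑g ∈ effectiveDomain f ∧
      IsMaxOn (fun v => ∑ i, (ψ i * v i - (f i (v i)).toReal)) (effectiveDomain f) ⇑g := by
  obtain ⟨w₀, hw₀⟩ := hK
  refine (forall_le_of_hasGradientAt_conj (fun w => ?_)
    (exists_forall_inner_sub_le (lowerSemicontinuous_sumOnSimplex hbot hclosed)
      isCompact_simplex (fun w hw => ?_) (w₀ := WithLp.toLp 2 w₀) ?_) hg).elim
    (isMaxOn_effectiveDomain hbot)
  · rw [sumOnSimplex_eq hbot]; split_ifs <;> simp
  · rw [sumOnSimplex_eq hbot, if_neg fun h => hw ⟨h.1, fun i => (h.2 i).1⟩]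
  · rw [sumOnSimplex_eq hbot, if_pos hw₀]; exact EReal.coe_ne_top _

end SumOnSimplex

theorem stmt3_general {N : ℕ} (f : Fin N → ℝ → EReal)
    (hproper : ∀ i, (∃ x, f i x ≠ ⊤) ∧ ∀ x, f i x ≠ ⊥)
    (hclosed : ∀ i, LowerSemicontinuous (f i))
    (hstrict : ∀ i, StrictConvex1 (f i))
    (F : E N → EReal)
    (hF : ∀ w, F w = (∑ i, f i (w i)) + (if w ∈ simplex N then (0 : EReal) else ⊤))
    (g : E N → E N)
    (hg : ∀ ψ : E N, HasGradientAt (fun φ => (conj F φ).toReal) (g ψ) ψ)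
    (ψ₁ : E N) (γ : ℝ) (hγ : 0 ≤ γ) (k : Fin N)
    (ψ₂ : E N) (hψ₂ : ψ₂ = ψ₁ - γ • EuclideanSpace.single k (1 : ℝ)) :
    g ψ₁ k - g ψ₂ k = ∑ j ∈ Finset.univ.erase k, |g ψ₁ j - g ψ₂ j| := by
  obtain rfl : F = sumOnSimplex f := funext hF
  have hbot : ∀ i x, f i x ≠ ⊥ := fun i => (hproper i).2
  rcases (effectiveDomain f).eq_empty_or_nonempty with hK | hK
  · simp [eq_zero_of_hasGradientAt_conj_sumOnSimplex hbot hK (hg _)]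
  have hmax := fun ψ => isMaxOn_effectiveDomain_of_hasGradientAt_conj hbot hclosed hK (hg ψ)
  have hφ : ∀ i, StrictConvexOn ℝ (Set.Ici 0 ∩ {x | f i x ≠ ⊤}) fun x => (f i x).toReal :=
    fun i => ((hstrict i).strictConvexOn_toReal (hbot i)).subset Set.inter_subset_right
      ((convex_Ici 0).inter ((hstrict i).convex_setOf_ne_top (hbot i)))
  refine sub_eq_sum_erase_abs_sub ((hmax ψ₁).1.1.trans (hmax ψ₂).1.1.symm) fun j hjk =>
    le_of_isMaxOn_budgetSet hφ (hmax ψ₁).1 (hmax ψ₁).2 (hmax ψ₂).1 (hmax ψ₂).2 fun l => ?_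
  subst hψ₂
  rcases eq_or_ne l k with rfl | hlk
  · simp [hjk, hγ]
  · simp [hjk, hlk]

theorem stmt3 {N : ℕ} (f : Fin N → ℝ → EReal)
    (hproper : ∀ i, (∃ x, f i x ≠ ⊤) ∧ ∀ x, f i x ≠ ⊥)
    (hclosed : ∀ i, LowerSemicontinuous (f i))
    (hstrict : ∀ i, StrictConvex1 (f i))
    (hdom : ∀ i, {x | f i x ≠ ⊤} ⊆ Set.Icc (0 : ℝ) 1)
    (F : E N → EReal)
    (hF : ∀ w, F w = (∑ i, f i (w i)) + (if w ∈ simplex N then (0 : EReal) else ⊤))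
    (g : E N → E N)
    (hg : ∀ ψ : E N, HasGradientAt (fun φ => (conj F φ).toReal) (g ψ) ψ)
    (ψ₁ : E N) (γ : ℝ) (hγ : 0 ≤ γ) (k : Fin N)
    (ψ₂ : E N) (hψ₂ : ψ₂ = ψ₁ - γ • EuclideanSpace.single k (1 : ℝ)) :
    g ψ₁ k - g ψ₂ k = ∑ j ∈ Finset.univ.erase k, |g ψ₁ j - g ψ₂ j| :=
  stmt3_general f hproper hclosed hstrict F hF g hg ψ₁ γ hγ k ψ₂ hψ₂
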